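/- Let q, y ∈ ℂ with 0 < |q| < 1 and y ≠ 0, and define G(x) := Σ_{n≥0} (y;q)_n (q/y;q)_n (−x)^n / (q²;q²)_n for |x| < 1. Then G satisfies the q-difference equation (1 + x) G(x) = (x y + x q/y) G(x q) + (1 − x q) G(x q²) for all |x| < 1. -/

import Mathlib

/-- Finite q-Pochhammer symbol `(a;q)_n`. -/
noncomputable def poch (a q : ℂ) (n : ℕ) : ℂ := ∏ j ∈ Finset.range n, (1 - a * q ^ j)

/-- Infinite q-Pochhammer symbol `(a;q)_∞`. -/
noncomputable def pochInf (a q : ℂ) : ℂ := ∏' j : ℕ, (1 - a * q ^ j)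

/-- The universal mock theta function `g₂(x;q)`. -/
noncomputable def g2 (x q : ℂ) : ℂ :=
  ∑' n : ℕ, poch (-q) q n * q ^ (n * (n + 1) / 2) / (poch x q (n + 1) * poch (q / x) q (n + 1))

/-! Write `G(x) = ∑ tₙ` with `tₙ = gTerm q y x n`. The recurrence
`tₙ₊₁ (1 - q²ⁿ⁺²) = -x (1 - y qⁿ) (1 - qⁿ⁺¹/y) tₙ` makes the `n`-th term of
`(1 + x) G(x) - (x y + x q/y) G(x q) - (1 - x q) G(x q²)` equal to `vₙ - vₙ₊₁` with
`vₙ = tₙ (1 - q²ⁿ)`; as `v₀ = 0` and `vₙ → 0`, the series sums to zero. Convergence for `|x| < 1`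
is the ratio test, the ratio `tₙ₊₁ / tₙ` tending to `-x`. -/

open Filter Topology

lemma norm_mul_lt_one_of_lt_of_le {R : Type*} [SeminormedRing R] {x c : R} (hx : ‖x‖ < 1)
    (hc : ‖c‖ ≤ 1) : ‖x * c‖ < 1 :=
  (norm_mul_le x c).trans_lt (mul_lt_one_of_nonneg_of_lt_one_left (norm_nonneg x) hx hc)

lemma one_sub_mul_pow_ne_zero {a q : ℂ} (ha : ‖a‖ < 1) (hq : ‖q‖ ≤ 1) (n : ℕ) :
    1 - a * q ^ n ≠ 0 := by
  refine sub_ne_zero.mpr fun h => ?_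
  have := norm_mul_lt_one_of_lt_of_le ha (c := q ^ n)
    (by rw [norm_pow]; exact pow_le_one₀ (norm_nonneg q) hq)
  simp [← h] at this

lemma poch_succ (a q : ℂ) (n : ℕ) : poch a q (n + 1) = poch a q n * (1 - a * q ^ n) :=
  Finset.prod_range_succ _ n

lemma poch_ne_zero {a q : ℂ} (ha : ‖a‖ < 1) (hq : ‖q‖ ≤ 1) (n : ℕ) : poch a q n ≠ 0 :=
  Finset.prod_ne_zero_iff.mpr fun j _ => one_sub_mul_pow_ne_zero ha hq j

lemma norm_sq_lt_one {q : ℂ} (hq : ‖q‖ < 1) : ‖q ^ 2‖ < 1 := by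
  rw [norm_pow]; exact pow_lt_one₀ (norm_nonneg q) hq two_ne_zero

lemma Summable.hasSum_sub_succ {E : Type*} [NormedAddCommGroup E] {v : ℕ → E} {l : E}
    (hs : Summable fun n => v n - v (n + 1)) (hv : Tendsto v atTop (𝓝 l)) :
    HasSum (fun n => v n - v (n + 1)) (v 0 - l) := by
  convert hs.hasSum
  refine tendsto_nhds_unique ((tendsto_const_nhds (x := v 0)).sub hv) ?_
  simpa only [Finset.sum_range_sub'] using hs.hasSum.tendsto_sum_nat

noncomputable def gTerm (q y x : ℂ) (n : ℕ) : ℂ :=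
  poch y q n * poch (q / y) q n * (-x) ^ n / poch (q ^ 2) (q ^ 2) n

section gTerm

variable {q : ℂ} (y : ℂ)

lemma gTerm_mul (x c : ℂ) (n : ℕ) : gTerm q y (x * c) n = gTerm q y x n * c ^ n := by
  simp only [gTerm, neg_mul_eq_neg_mul, mul_pow]; ring

lemma gTerm_succ (hq : ‖q‖ < 1) (x : ℂ) (n : ℕ) :
    gTerm q y x (n + 1) =
      (1 - y * q ^ n) * (1 - q / y * q ^ n) / (1 - q ^ 2 * (q ^ 2) ^ n) * -x * gTerm q y x n := by
  have hq2 := norm_sq_lt_one hq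
  have := poch_ne_zero hq2 hq2.le n
  have := one_sub_mul_pow_ne_zero hq2 hq2.le n
  simp only [gTerm, poch_succ]
  field_simp
  ring

lemma summable_gTerm (hq : ‖q‖ < 1) {x : ℂ} (hx : ‖x‖ < 1) : Summable (gTerm q y x) := by
  obtain ⟨r, hxr, hr⟩ := exists_between hx
  refine summable_of_ratio_norm_eventually_le hr ?_
  have hratio : Tendsto (fun n : ℕ =>
      (1 - y * q ^ n) * (1 - q / y * q ^ n) / (1 - q ^ 2 * (q ^ 2) ^ n) * -x) atTop (𝓝 (-x)) := by
    have hqn := tendsto_pow_atTop_nhds_zero_of_norm_lt_one hq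
    have hq2n := tendsto_pow_atTop_nhds_zero_of_norm_lt_one (norm_sq_lt_one hq)
    have h1 : Tendsto (fun _ : ℕ => (1 : ℂ)) atTop (𝓝 1) := tendsto_const_nhds
    simpa using (((h1.sub (hqn.const_mul y)).mul (h1.sub (hqn.const_mul (q / y)))).div
      (h1.sub (hq2n.const_mul (q ^ 2))) (by simp)).mul_const (-x)
  filter_upwards [hratio.norm.eventually_lt_const (by simpa using hxr)] with n hn
  rw [gTerm_succ y hq, norm_mul]
  exact mul_le_mul_of_nonneg_right hn.le (norm_nonneg _)

lemma gTerm_qdiff_eq_sub_succ (hq : ‖q‖ < 1) (hy : y ≠ 0) (x : ℂ) (n : ℕ) :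
    (1 + x) * gTerm q y x n -
        ((x * y + x * q / y) * gTerm q y (x * q) n + (1 - x * q) * gTerm q y (x * q ^ 2) n) =
      gTerm q y x n * (1 - (q ^ 2) ^ n) - gTerm q y x (n + 1) * (1 - (q ^ 2) ^ (n + 1)) := by
  have hrec : gTerm q y x (n + 1) * (1 - q ^ 2 * (q ^ 2) ^ n) =
      (1 - y * q ^ n) * (1 - q / y * q ^ n) * -x * gTerm q y x n := by
    have hq2 := norm_sq_lt_one hq
    rw [gTerm_succ y hq]
    field_simp [one_sub_mul_pow_ne_zero hq2 hq2.le n]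
  rw [gTerm_mul, gTerm_mul, pow_succ (q ^ 2), pow_right_comm]
  rw [pow_right_comm] at hrec
  linear_combination hrec - (x * q * (q ^ n) ^ 2 * gTerm q y x n) * mul_inv_cancel₀ hy

end gTerm

theorem G_qdiff_general (q y : ℂ) (hq1 : ‖q‖ < 1) (hy : y ≠ 0)
    (G : ℂ → ℂ)
    (hG : ∀ x : ℂ, ‖x‖ < 1 →
      G x = ∑' n : ℕ, poch y q n * poch (q / y) q n * (-x) ^ n / poch (q ^ 2) (q ^ 2) n) :
    ∀ x : ℂ, ‖x‖ < 1 →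
      (1 + x) * G x = (x * y + x * q / y) * G (x * q) + (1 - x * q) * G (x * q ^ 2) := by
  intro x hx
  have hq2 := norm_sq_lt_one hq1
  have hxq := norm_mul_lt_one_of_lt_of_le hx hq1.le
  have hxq2 := norm_mul_lt_one_of_lt_of_le hx hq2.le
  have hsum (s : ℂ) (hs : ‖s‖ < 1) : HasSum (gTerm q y s) (G s) := by
    rw [hG s hs]; exact (summable_gTerm y hq1 hs).hasSum
  have hdiff := ((hsum x hx).mul_left (1 + x)).sub
    (((hsum _ hxq).mul_left (x * y + x * q / y)).add ((hsum _ hxq2).mul_left (1 - x * q)))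
  simp only [gTerm_qdiff_eq_sub_succ y hq1 hy] at hdiff
  have hv : Tendsto (fun n => gTerm q y x n * (1 - (q ^ 2) ^ n)) atTop (𝓝 0) := by
    simpa using (summable_gTerm y hq1 hx).tendsto_atTop_zero.mul
      (tendsto_const_nhds.sub (tendsto_pow_atTop_nhds_zero_of_norm_lt_one hq2))
  have htele := hdiff.summable.hasSum_sub_succ hv
  simp only [pow_zero, sub_self, mul_zero] at htele
  linear_combination hdiff.unique htele

/-- Equation (2.2): the series `G` satisfies
`(1 + x) G(x) = (x y + x q/y) G(x q) + (1 − x q) G(x q²)`. -/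
theorem G_qdiff (q y : ℂ) (hq0 : 0 < ‖q‖) (hq1 : ‖q‖ < 1) (hy : y ≠ 0)
    (G : ℂ → ℂ)
    (hG : ∀ x : ℂ, ‖x‖ < 1 →
      G x = ∑' n : ℕ, poch y q n * poch (q / y) q n * (-x) ^ n / poch (q ^ 2) (q ^ 2) n) :
    ∀ x : ℂ, ‖x‖ < 1 →
      (1 + x) * G x = (x * y + x * q / y) * G (x * q) + (1 - x * q) * G (x * q ^ 2) :=
  G_qdiff_general q y hq1 hy G hG
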